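/- arXiv:2410.13730 — 5 statements merged into one kernel-verified Lean document; each statement's English description precedes it below -/
import Mathlib

section
/- A locally Lipschitz map H : D → ℝⁿ on an open set D ⊆ ℝⁿ is Fréchet differentiable at x ∈ D if and only if the tangent cone to the graph of H at (x, H(x)) is an n-dimensional linear subspace of ℝⁿ × ℝⁿ; in that case this tangent cone equals {(p, ∇H(x)p) : p ∈ ℝⁿ}. -/
/-!
If `H` has derivative `A` at `x`, every difference quotient `t⁻¹ (H (x + t u) - H x)` with
`t ↓ 0` and `u → p` tends to `A p`, so the tangent cone to the graph is the graph of `A`.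
Conversely, the Lipschitz bound `‖q‖ ≤ K ‖p‖` on the cone rules out vertical vectors `(0, q)`,
so an `n`-dimensional subspace cone projects isomorphically onto the first factor and is the
graph of a linear map `A`. If `H` were not differentiable with derivative `A`, there would be
difference quotients staying `ε` away from `A` along unit directions; being bounded by the
Lipschitz constant, they have a limit point by compactness, and it lies in the cone but off the
graph of `A`.
-/

open Filter Topology Metric Set
open scoped NNReal

noncomputable section

def tangentConeSeq {F : Type*} [NormedAddCommGroup F] [NormedSpace ℝ F]
    (Ω : Set F) (xb : F) : Set F :=
  {v | ∃ (t : ℕ → ℝ) (w : ℕ → F), (∀ k, 0 < t k) ∧ Tendsto t atTop (𝓝 0) ∧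
      Tendsto w atTop (𝓝 v) ∧ ∀ k, xb + t k • w k ∈ Ω}

section TangentCone

variable {E F : Type*} [NormedAddCommGroup E] [NormedSpace ℝ E]
  [NormedAddCommGroup F] [NormedSpace ℝ F]

theorem mem_tangentConeSeq_iff {Ω : Set F} {xb v : F} :
    v ∈ tangentConeSeq Ω xb ↔ ∃ (t : ℕ → ℝ) (w : ℕ → F), Tendsto t atTop (𝓝[>] 0) ∧
      Tendsto w atTop (𝓝 v) ∧ ∀ᶠ k in atTop, xb + t k • w k ∈ Ω := by
  constructor
  · rintro ⟨t, w, hpos, ht, hw, hmem⟩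
    exact ⟨t, w, tendsto_nhdsWithin_iff.2 ⟨ht, .of_forall hpos⟩, hw, .of_forall hmem⟩
  · rintro ⟨t, w, ht, hw, hmem⟩
    obtain ⟨N, hN⟩ := eventually_atTop.1 ((tendsto_nhdsWithin_iff.1 ht).2.and hmem)
    refine ⟨fun k => t (k + N), fun k => w (k + N), fun k => (hN _ (by omega)).1,
      (tendsto_add_atTop_iff_nat N).2 (tendsto_nhdsWithin_iff.1 ht).1,
      (tendsto_add_atTop_iff_nat N).2 hw, fun k => (hN _ (by omega)).2⟩

def diffQuotient (H : E → F) (x : E) (t : ℝ) (u : E) : F :=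
  t⁻¹ • (H (x + t • u) - H x)

variable {D : Set E} {H : E → F} {x : E}

theorem mem_tangentConeSeq_graphOn_iff {v : E × F} :
    v ∈ tangentConeSeq (D.graphOn H) (x, H x) ↔
      ∃ (t : ℕ → ℝ) (u : ℕ → E), Tendsto t atTop (𝓝[>] 0) ∧ Tendsto u atTop (𝓝 v.1) ∧
        (∀ᶠ k in atTop, x + t k • u k ∈ D) ∧
        Tendsto (fun k => diffQuotient H x (t k) (u k)) atTop (𝓝 v.2) := by
  rw [mem_tangentConeSeq_iff]
  constructor
  · rintro ⟨t, w, ht, hw, hmem⟩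
    refine ⟨t, fun k => (w k).1, ht, hw.fst_nhds,
      hmem.mono fun k hk => (mem_graphOn.1 hk).1, ?_⟩
    refine hw.snd_nhds.congr' ?_
    filter_upwards [hmem, (tendsto_nhdsWithin_iff.1 ht).2] with k hk hpos
    have hk : H (x + t k • (w k).1) = H x + t k • (w k).2 := (mem_graphOn.1 hk).2
    simp [diffQuotient, hk, (mem_Ioi.1 hpos).ne']
  · rintro ⟨t, u, ht, hu, hmem, hq⟩
    refine ⟨t, fun k => (u k, diffQuotient H x (t k) (u k)), ht, hu.prodMk_nhds hq, ?_⟩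
    filter_upwards [hmem, (tendsto_nhdsWithin_iff.1 ht).2] with k hk hpos
    simp [diffQuotient, hk, (mem_Ioi.1 hpos).ne']

theorem HasFDerivAt.tendsto_diffQuotient {A : E →L[ℝ] F} (hH : HasFDerivAt H A x)
    {t : ℕ → ℝ} {u : ℕ → E} {p : E} (ht : Tendsto t atTop (𝓝[>] 0))
    (hu : Tendsto u atTop (𝓝 p)) :
    Tendsto (fun k => diffQuotient H x (t k) (u k)) atTop (𝓝 (A p)) := by
  have htu : Tendsto (fun k => t k • u k) atTop (𝓝 0) := by
    simpa using (tendsto_nhdsWithin_iff.1 ht).1.smul hu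
  refine (hH.hasFDerivWithinAt (s := univ)).lim htu (.of_forall fun _ => mem_univ _)
    (hu.congr' ?_)
  filter_upwards [(tendsto_nhdsWithin_iff.1 ht).2] with k hpos
  simp [(mem_Ioi.1 hpos).ne']

theorem HasFDerivAt.tangentConeSeq_graphOn_eq {A : E →L[ℝ] F} (hH : HasFDerivAt H A x)
    (hD : D ∈ 𝓝 x) : tangentConeSeq (D.graphOn H) (x, H x) = {v | v.2 = A v.1} := by
  ext ⟨p, q⟩
  rw [mem_tangentConeSeq_graphOn_iff]
  constructor
  · rintro ⟨t, u, ht, hu, -, hq⟩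
    exact tendsto_nhds_unique hq (hH.tendsto_diffQuotient ht hu)
  · rintro (rfl : q = A p)
    have ht : Tendsto (fun k : ℕ => 1 / ((k : ℝ) + 1)) atTop (𝓝[>] 0) :=
      tendsto_nhdsWithin_iff.2 ⟨tendsto_one_div_add_atTop_nhds_zero_nat,
        .of_forall fun k => mem_Ioi.2 (by positivity)⟩
    have hxD : Tendsto (fun k : ℕ => x + (1 / ((k : ℝ) + 1)) • p) atTop (𝓝 x) := by
      simpa using tendsto_const_nhds.add ((tendsto_nhdsWithin_iff.1 ht).1.smul_const p)
    exact ⟨_, fun _ => p, ht, tendsto_const_nhds, hxD hD,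
      hH.tendsto_diffQuotient ht tendsto_const_nhds⟩

theorem LipschitzOnWith.norm_diffQuotient_le {K : ℝ≥0} {s : Set E}
    (hH : LipschitzOnWith K H s) (hx : x ∈ s) {t : ℝ} {u : E} (ht : 0 < t)
    (hxu : x + t • u ∈ s) : ‖diffQuotient H x t u‖ ≤ K * ‖u‖ := by
  have h := hH.norm_sub_le hxu hx
  rw [add_sub_cancel_left, norm_smul, Real.norm_of_nonneg ht.le] at h
  rw [diffQuotient, norm_smul, norm_inv, Real.norm_of_nonneg ht.le, inv_mul_le_iff₀ ht]
  linarith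

theorem LipschitzOnWith.norm_snd_le_of_mem_tangentConeSeq_graphOn {K : ℝ≥0} {s : Set E}
    (hH : LipschitzOnWith K H s) (hs : s ∈ 𝓝 x) {v : E × F}
    (hv : v ∈ tangentConeSeq (D.graphOn H) (x, H x)) : ‖v.2‖ ≤ K * ‖v.1‖ := by
  obtain ⟨t, u, ht, hu, -, hq⟩ := mem_tangentConeSeq_graphOn_iff.1 hv
  have hxs : ∀ᶠ k in atTop, x + t k • u k ∈ s := by
    have : Tendsto (fun k => x + t k • u k) atTop (𝓝 x) := by
      simpa using tendsto_const_nhds.add ((tendsto_nhdsWithin_iff.1 ht).1.smul hu)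
    exact this hs
  refine le_of_tendsto_of_tendsto hq.norm (hu.norm.const_mul _) ?_
  filter_upwards [hxs, (tendsto_nhdsWithin_iff.1 ht).2] with k hk hpos
  exact hH.norm_diffQuotient_le (mem_of_mem_nhds hs) (mem_Ioi.1 hpos) hk

end TangentCone

theorem Submodule.exists_eq_graph_of_finrank_eq {𝕜 E F : Type*} [Field 𝕜] [AddCommGroup E]
    [Module 𝕜 E] [AddCommGroup F] [Module 𝕜 F] [FiniteDimensional 𝕜 E]
    {L : Submodule 𝕜 (E × F)} (hL : ∀ v ∈ L, v.1 = 0 → v.2 = 0)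
    (h : Module.finrank 𝕜 L = Module.finrank 𝕜 E) : ∃ A : E →ₗ[𝕜] F, L = A.graph := by
  set f := (LinearMap.fst 𝕜 E F).comp L.subtype
  have hinj : Function.Injective f := by
    rw [← LinearMap.ker_eq_bot, LinearMap.ker_eq_bot']
    rintro ⟨v, hv⟩ (h1 : v.1 = 0)
    exact Subtype.ext (Prod.ext h1 (hL v hv h1))
  have : FiniteDimensional 𝕜 L := FiniteDimensional.of_injective f hinj
  exact Submodule.exists_eq_graph
    ⟨hinj, (LinearMap.injective_iff_surjective_of_finrank_eq_finrank h).1 hinj⟩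

section Compactness

variable {E F : Type*} [NormedAddCommGroup E] [NormedSpace ℝ E] [ProperSpace E]
  [NormedAddCommGroup F] [NormedSpace ℝ F] [ProperSpace F] {D : Set E} {H : E → F} {x : E}

theorem exists_subseq_tendsto_mem_tangentConeSeq_graphOn {t : ℕ → ℝ} {u : ℕ → E}
    (ht : Tendsto t atTop (𝓝[>] 0)) (hD : ∀ᶠ k in atTop, x + t k • u k ∈ D) {R : ℝ}
    (hbdd : ∀ᶠ k in atTop, ‖u k‖ ≤ R ∧ ‖diffQuotient H x (t k) (u k)‖ ≤ R) :
    ∃ v ∈ tangentConeSeq (D.graphOn H) (x, H x), ∃ φ : ℕ → ℕ, StrictMono φ ∧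
      Tendsto (fun k => (u (φ k), diffQuotient H x (t (φ k)) (u (φ k)))) atTop (𝓝 v) := by
  obtain ⟨v, -, φ, hφ, hv⟩ := tendsto_subseq_of_frequently_bounded
    (x := fun k => (u k, diffQuotient H x (t k) (u k))) isBounded_closedBall
    (hbdd.mono fun k hk => mem_closedBall_zero_iff.2 (norm_prod_le_iff.2 hk)).frequently
  exact ⟨v, mem_tangentConeSeq_graphOn_iff.2 ⟨t ∘ φ, u ∘ φ, ht.comp hφ.tendsto_atTop,
    hv.fst_nhds, hφ.tendsto_atTop.eventually hD, hv.snd_nhds⟩, φ, hφ, hv⟩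

theorem hasFDerivAt_of_tangentConeSeq_graphOn_subset {A : E →L[ℝ] F} {K : ℝ≥0} {s : Set E}
    (hD : D ∈ 𝓝 x) (hH : LipschitzOnWith K H s) (hs : s ∈ 𝓝 x)
    (hcone : tangentConeSeq (D.graphOn H) (x, H x) ⊆ {v | v.2 = A v.1}) :
    HasFDerivAt H A x := by
  rw [hasFDerivAt_iff_isLittleO_nhds_zero, Asymptotics.isLittleO_iff]
  by_contra! ⟨ε, hε, hfar⟩
  obtain ⟨h, hh, hfar⟩ := frequently_iff_seq_forall.1 hfar
  have hpos : ∀ k, 0 < ‖h k‖ := fun k => norm_pos_iff.2 fun h0 => by simpa [h0] using hfar k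
  set t := fun k => ‖h k‖
  set u := fun k => (t k)⁻¹ • h k
  have htu : ∀ k, t k • u k = h k := fun k => smul_inv_smul₀ (hpos k).ne' _
  have ht : Tendsto t atTop (𝓝[>] 0) :=
    tendsto_nhdsWithin_iff.2 ⟨by simpa using hh.norm, .of_forall hpos⟩
  have hxh : ∀ᶠ k in atTop, x + h k ∈ s ∩ D := by
    have : Tendsto (fun k => x + h k) atTop (𝓝 x) := by simpa using tendsto_const_nhds.add hh
    exact this (inter_mem hs hD)
  have hbdd : ∀ᶠ k in atTop, ‖u k‖ ≤ max 1 K ∧ ‖diffQuotient H x (t k) (u k)‖ ≤ max 1 K := by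
    filter_upwards [hxh] with k hk
    have hu1 : ‖u k‖ = 1 := by rw [norm_smul, norm_inv, norm_norm, inv_mul_cancel₀ (hpos k).ne']
    have hq := hH.norm_diffQuotient_le (mem_of_mem_nhds hs) (hpos k) (by rw [htu]; exact hk.1)
    rw [hu1, mul_one] at hq
    exact ⟨hu1.trans_le (le_max_left _ _), hq.trans (le_max_right _ _)⟩
  obtain ⟨v, hv, φ, hφ, hlim⟩ := exists_subseq_tendsto_mem_tangentConeSeq_graphOn ht
    (hxh.mono fun k hk => by rw [htu]; exact hk.2) hbdd
  have hgap : ∀ k, ε ≤ ‖diffQuotient H x (t k) (u k) - A (u k)‖ := by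
    intro k
    have : diffQuotient H x (t k) (u k) - A (u k) = (t k)⁻¹ • (H (x + h k) - H x - A (h k)) := by
      simp only [diffQuotient, htu, u, map_smul, smul_sub]
    rw [this, norm_smul, norm_inv, norm_norm, le_inv_mul_iff₀ (hpos k), mul_comm]
    exact (hfar k).le
  have hlim' : Tendsto (fun k => ‖diffQuotient H x (t (φ k)) (u (φ k)) - A (u (φ k))‖) atTop
      (𝓝 ‖v.2 - A v.1‖) :=
    (hlim.snd_nhds.sub ((A.continuous.tendsto v.1).comp hlim.fst_nhds)).norm
  rw [show v.2 = A v.1 from hcone hv, sub_self, norm_zero] at hlim'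
  linarith [ge_of_tendsto hlim' (.of_forall fun k => hgap (φ k))]

end Compactness

/-- A locally Lipschitz map on an open set is Fréchet differentiable at a point iff the
tangent cone to its graph there is an n-dimensional subspace, in which case the tangent
cone is the graph of the derivative. -/
theorem differentiable_iff_tangentCone_subspace
    {n : ℕ} (D : Set (EuclideanSpace ℝ (Fin n))) (hD : IsOpen D)
    (H : EuclideanSpace ℝ (Fin n) → EuclideanSpace ℝ (Fin n))
    (hlip : ∀ x ∈ D, ∃ (K : ℝ≥0) (t : Set (EuclideanSpace ℝ (Fin n))),
      t ∈ 𝓝 x ∧ LipschitzOnWith K H t)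
    (x : EuclideanSpace ℝ (Fin n)) (hx : x ∈ D) :
    (DifferentiableAt ℝ H x ↔
      ∃ L : Submodule ℝ (EuclideanSpace ℝ (Fin n) × EuclideanSpace ℝ (Fin n)),
        Module.finrank ℝ L = n ∧
        tangentConeSeq {p | p.1 ∈ D ∧ p.2 = H p.1} (x, H x) = (L : Set _)) ∧
    (DifferentiableAt ℝ H x →
      tangentConeSeq {p | p.1 ∈ D ∧ p.2 = H p.1} (x, H x)
        = {v | ∃ p, v = (p, fderiv ℝ H x p)}) := by
  have hgraph : {p | p.1 ∈ D ∧ p.2 = H p.1} = D.graphOn H := by ext; simp [eq_comm]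
  have hDx : D ∈ 𝓝 x := hD.mem_nhds hx
  obtain ⟨K, s, hs, hHs⟩ := hlip x hx
  have hcone (hdiff : DifferentiableAt ℝ H x) :
      tangentConeSeq (D.graphOn H) (x, H x) = {v | v.2 = fderiv ℝ H x v.1} :=
    hdiff.hasFDerivAt.tangentConeSeq_graphOn_eq hDx
  rw [hgraph]
  refine ⟨⟨fun hdiff => ⟨LinearMap.graph (fderiv ℝ H x : _ →ₗ[ℝ] _), ?_, by rw [hcone hdiff]; rfl⟩, ?_⟩,
    fun hdiff => ?_⟩
  · rw [LinearMap.graph_eq_range_prod, LinearMap.finrank_range_of_inj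
      (fun a b hab => congrArg Prod.fst hab), finrank_euclideanSpace_fin]
  · rintro ⟨L, hL, hconeL⟩
    have hvert (v) (hv : v ∈ L) (hv1 : v.1 = 0) : v.2 = 0 := by
      simpa [hv1] using hHs.norm_snd_le_of_mem_tangentConeSeq_graphOn hs (hconeL.superset hv)
    obtain ⟨A, rfl⟩ := Submodule.exists_eq_graph_of_finrank_eq hvert
      (by rw [hL, finrank_euclideanSpace_fin])
    exact (hasFDerivAt_of_tangentConeSeq_graphOn_subset (A := LinearMap.toContinuousLinearMap A)
      hDx hHs hs hconeL.subset).differentiableAt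
  · rw [hcone hdiff]
    ext v
    exact ⟨fun h => ⟨v.1, Prod.ext rfl h⟩, by rintro ⟨p, rfl⟩; rfl⟩
end
end

section
/- Let P, W be symmetric n×n matrices with P² = P and W(I - P) = I - P, and let x* ∈ ℝⁿ. Then a vector s̄ satisfies (s̄, -x*) ∈ rge(P, W) := {(Pp, Wp) : p ∈ ℝⁿ} if and only if W s̄ = -P x*. -/
/-- For symmetric P, W with P² = P and W(I-P) = I-P:
(s̄, -x*) ∈ rge(P, W) iff W s̄ = -P x*. -/
theorem mem_rgePW_iff
    {n : ℕ} (P W : Matrix (Fin n) (Fin n) ℝ)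
    (hPsymm : P.IsSymm) (hWsymm : W.IsSymm)
    (hPidem : P * P = P) (hW : W * (1 - P) = 1 - P)
    (xs sb : Fin n → ℝ) :
    (∃ p : Fin n → ℝ, sb = P.mulVec p ∧ -xs = W.mulVec p) ↔
      W.mulVec sb = -(P.mulVec xs) := by
  have h1 : W - W * P = 1 - P := by
    rw [mul_sub, mul_one] at hW; exact hW
  have h2 : W - P * W = 1 - P := by
    have := congrArg Matrix.transpose h1
    simpa [Matrix.transpose_sub, Matrix.transpose_mul, hPsymm.eq, hWsymm.eq] using this
  have hcomm : P * W = W * P :=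
    (sub_right_inj.mp (h2.trans h1.symm))
  constructor
  · rintro ⟨p, hs, hx⟩
    rw [hs, Matrix.mulVec_mulVec, ← hcomm, ← Matrix.mulVec_mulVec, ← hx,
      Matrix.mulVec_neg]
  · intro h
    -- first show (1 - P) sb = 0, i.e. sb = P sb
    have hPsb : P.mulVec sb = sb := by
      have h3 : (1 - P).mulVec sb = 0 := by
        have : ((1 - P) * W).mulVec sb = (1 - P).mulVec sb := by
          have : (1 - P) * W = 1 - P := by
            rw [sub_mul, one_mul]; exact h2
          rw [this]
        rw [← Matrix.mulVec_mulVec, h] at this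
        rw [← this, Matrix.mulVec_neg, Matrix.mulVec_mulVec, sub_mul, one_mul, hPidem,
          sub_self, Matrix.zero_mulVec, neg_zero]
      have := congrArg (· + P.mulVec sb) h3
      simpa [Matrix.sub_mulVec, sub_add_cancel] using this.symm
    refine ⟨sb - (1 - P).mulVec xs, ?_, ?_⟩
    · rw [Matrix.mulVec_sub, Matrix.mulVec_mulVec, mul_sub, mul_one, hPidem, sub_self,
        Matrix.zero_mulVec, sub_zero, hPsb]
    · rw [Matrix.mulVec_sub, Matrix.mulVec_mulVec, hW, h, Matrix.sub_mulVec,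
        Matrix.one_mulVec]
      abel
end

section
/- For 0 < q < 1, the limiting subdifferential of t ↦ |t|^q on ℝ is {q|t|^{q-1} sign(t)} if t ≠ 0, and is all of ℝ if t = 0. -/
/-!
Where `φ` is differentiable on a neighbourhood of `t` with a derivative continuous at `t`, every
regular subgradient near `t` is the derivative there, so limits of regular subgradients can only be
`φ' t`; this covers `|u| ^ q` at `t ≠ 0`. At `0` the function grows faster than any `c * |u|`,
because `|u| = |u| ^ (1 - q) * |u| ^ q` and `|u| ^ (1 - q) → 0`; hence every slope is a regular
subgradient at `0`, and so also a limiting one.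
-/

open Filter Topology

noncomputable section

/-- The regular (Fréchet) subdifferential of a real function on ℝ (ε-δ form). -/
def regSubdiffR (φ : ℝ → ℝ) (t : ℝ) : Set ℝ :=
  {s | ∀ ε > (0 : ℝ), ∃ δ > (0 : ℝ), ∀ u, |u - t| < δ →
      φ t + s * (u - t) - ε * |u - t| ≤ φ u}

/-- The limiting (Mordukhovich) subdifferential of a real function on ℝ. -/
def limSubdiffR (φ : ℝ → ℝ) (t : ℝ) : Set ℝ :=
  {s | ∃ (tk : ℕ → ℝ) (sk : ℕ → ℝ), Tendsto tk atTop (𝓝 t) ∧ Tendsto sk atTop (𝓝 s) ∧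
      (∀ k, sk k ∈ regSubdiffR φ (tk k)) ∧ Tendsto (fun k => φ (tk k)) atTop (𝓝 (φ t))}

lemma mem_regSubdiffR_iff_eventually {φ : ℝ → ℝ} {s t : ℝ} :
    s ∈ regSubdiffR φ t ↔
      ∀ ε > (0 : ℝ), ∀ᶠ u in 𝓝 t, φ t + s * (u - t) - ε * |u - t| ≤ φ u := by
  simp only [Metric.eventually_nhds_iff, Real.dist_eq]
  rfl

lemma regSubdiffR_subset_limSubdiffR (φ : ℝ → ℝ) (t : ℝ) :
    regSubdiffR φ t ⊆ limSubdiffR φ t := fun s hs =>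
  ⟨fun _ => t, fun _ => s, tendsto_const_nhds, tendsto_const_nhds, fun _ => hs,
    tendsto_const_nhds⟩

lemma eq_zero_of_forall_eventually_mul_sub_le {a t : ℝ}
    (h : ∀ ε > (0 : ℝ), ∀ᶠ u in 𝓝 t, a * (u - t) ≤ ε * |u - t|) : a = 0 := by
  refine eq_of_forall_dist_le fun ε hε => ?_
  obtain ⟨u, hu, hut⟩ : ∃ u, a * (u - t) ≤ ε * |u - t| ∧ t < u :=
    (((h ε hε).filter_mono nhdsWithin_le_nhds).and self_mem_nhdsWithin).exists (f := 𝓝[>] t)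
  obtain ⟨v, hv, hvt⟩ : ∃ v, a * (v - t) ≤ ε * |v - t| ∧ v < t :=
    (((h ε hε).filter_mono nhdsWithin_le_nhds).and self_mem_nhdsWithin).exists (f := 𝓝[<] t)
  rw [abs_of_pos (sub_pos.mpr hut)] at hu
  rw [abs_of_neg (sub_neg.mpr hvt)] at hv
  rw [Real.dist_eq, sub_zero, abs_le]
  constructor <;> nlinarith

section Differentiable

variable {φ : ℝ → ℝ} {d t : ℝ}

lemma mem_regSubdiffR_of_hasDerivAt (h : HasDerivAt φ d t) : d ∈ regSubdiffR φ t := by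
  refine mem_regSubdiffR_iff_eventually.mpr fun ε hε => ?_
  filter_upwards [(hasDerivAt_iff_isLittleO.mp h).def hε] with u hu
  rw [Real.norm_eq_abs, Real.norm_eq_abs, smul_eq_mul] at hu
  linarith [neg_abs_le (φ u - φ t - (u - t) * d)]

lemma eq_of_mem_regSubdiffR_of_hasDerivAt {s : ℝ} (hs : s ∈ regSubdiffR φ t)
    (h : HasDerivAt φ d t) : s = d := by
  refine sub_eq_zero.mp (eq_zero_of_forall_eventually_mul_sub_le (t := t) fun ε hε => ?_)
  filter_upwards [mem_regSubdiffR_iff_eventually.mp hs (ε / 2) (half_pos hε),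
    (hasDerivAt_iff_isLittleO.mp h).def (half_pos hε)] with u hreg hderiv
  rw [Real.norm_eq_abs, Real.norm_eq_abs, smul_eq_mul] at hderiv
  linarith [le_abs_self (φ u - φ t - (u - t) * d)]

lemma limSubdiffR_eq_singleton_of_hasDerivAt {φ' : ℝ → ℝ}
    (hφ : ∀ᶠ u in 𝓝 t, HasDerivAt φ (φ' u) u) (hφ' : ContinuousAt φ' t) :
    limSubdiffR φ t = {φ' t} := by
  refine subset_antisymm ?_ (Set.singleton_subset_iff.mpr
    (regSubdiffR_subset_limSubdiffR φ t (mem_regSubdiffR_of_hasDerivAt hφ.self_of_nhds)))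
  rintro s ⟨tk, sk, htk, hsk, hreg, -⟩
  have hsk_eq : sk =ᶠ[atTop] fun k => φ' (tk k) :=
    (htk.eventually hφ).mono fun k hk => eq_of_mem_regSubdiffR_of_hasDerivAt (hreg k) hk
  exact tendsto_nhds_unique (hsk.congr' hsk_eq) (hφ'.tendsto.comp htk)

end Differentiable

lemma regSubdiffR_eq_univ_of_forall_eventually {φ : ℝ → ℝ} {t : ℝ}
    (h : ∀ c : ℝ, ∀ᶠ u in 𝓝 t, φ t + c * |u - t| ≤ φ u) : regSubdiffR φ t = Set.univ := by
  refine Set.eq_univ_of_forall fun s => mem_regSubdiffR_iff_eventually.mpr fun ε hε => ?_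
  filter_upwards [h |s|] with u hu
  have hslope : s * (u - t) ≤ |s| * |u - t| := (le_abs_self _).trans (abs_mul s (u - t)).le
  nlinarith [abs_nonneg (u - t)]

namespace Real

lemma sign_eventuallyEq {t : ℝ} (ht : t ≠ 0) : ∀ᶠ u in 𝓝 t, sign u = sign t := by
  rcases ht.lt_or_gt with ht | ht
  · filter_upwards [eventually_lt_nhds ht] with u hu
    rw [sign_of_neg hu, sign_of_neg ht]
  · filter_upwards [eventually_gt_nhds ht] with u hu
    rw [sign_of_pos hu, sign_of_pos ht]

lemma continuousAt_sign_of_ne_zero {t : ℝ} (ht : t ≠ 0) : ContinuousAt sign t :=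
  continuousAt_const.congr ((sign_eventuallyEq ht).mono fun _ hu => hu.symm)

lemma hasDerivAt_abs_sign {t : ℝ} (ht : t ≠ 0) : HasDerivAt (|·|) (sign t) t := by
  rcases ht.lt_or_gt with ht | ht
  · simpa [sign_of_neg ht] using hasDerivAt_abs_neg ht
  · simpa [sign_of_pos ht] using hasDerivAt_abs_pos ht

lemma hasDerivAt_abs_rpow_of_ne_zero (q : ℝ) {t : ℝ} (ht : t ≠ 0) :
    HasDerivAt (fun u => |u| ^ q) (q * |t| ^ (q - 1) * sign t) t := by
  convert (hasDerivAt_abs_sign ht).rpow_const (p := q) (Or.inl (abs_ne_zero.mpr ht)) using 1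
  ring

lemma continuousAt_deriv_abs_rpow (q : ℝ) {t : ℝ} (ht : t ≠ 0) :
    ContinuousAt (fun u => q * |u| ^ (q - 1) * sign u) t :=
  (continuousAt_const.mul (continuous_abs.continuousAt.rpow_const
    (Or.inl (abs_ne_zero.mpr ht)))).mul (continuousAt_sign_of_ne_zero ht)

lemma eventually_mul_abs_le_abs_rpow {q : ℝ} (hq1 : q < 1) (c : ℝ) :
    ∀ᶠ u in 𝓝 0, c * |u| ≤ |u| ^ q := by
  have hlim : Tendsto (fun u : ℝ => c * |u| ^ (1 - q)) (𝓝 0) (𝓝 0) := by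
    simpa [zero_rpow (sub_pos.mpr hq1).ne'] using
      (continuous_abs.tendsto (0 : ℝ)).rpow_const (Or.inr (sub_pos.mpr hq1).le) |>.const_mul c
  filter_upwards [hlim.eventually_lt_const one_pos] with u hu
  have hsplit : |u| = |u| ^ (1 - q) * |u| ^ q := by
    rw [← rpow_add' (abs_nonneg u) (by norm_num), sub_add_cancel, rpow_one]
  calc c * |u| = c * |u| ^ (1 - q) * |u| ^ q := by rw [mul_assoc, ← hsplit]
    _ ≤ 1 * |u| ^ q := by gcongr
    _ = |u| ^ q := one_mul _

end Real

/-- The limiting subdifferential of t ↦ |t|^q for 0 < q < 1. -/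
theorem limSubdiff_abs_rpow (q : ℝ) (hq0 : 0 < q) (hq1 : q < 1) :
    (∀ t : ℝ, t ≠ 0 →
      limSubdiffR (fun u => |u| ^ q) t = {q * |t| ^ (q - 1) * Real.sign t}) ∧
    limSubdiffR (fun u => |u| ^ q) 0 = Set.univ := by
  refine ⟨fun t ht => limSubdiffR_eq_singleton_of_hasDerivAt
    ((eventually_ne_nhds ht).mono fun u hu => Real.hasDerivAt_abs_rpow_of_ne_zero q hu)
    (Real.continuousAt_deriv_abs_rpow q ht), ?_⟩
  have hreg : regSubdiffR (fun u => |u| ^ q) 0 = Set.univ :=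
    regSubdiffR_eq_univ_of_forall_eventually fun c => by
      simpa [Real.zero_rpow hq0.ne'] using Real.eventually_mul_abs_le_abs_rpow hq1 c
  exact Set.eq_univ_of_univ_subset (hreg ▸ regSubdiffR_subset_limSubdiffR _ 0)
end
end

section
/- For 0 < q < 1, the function t ↦ |t|^q is prox-regular at t̄ = 0 for every subgradient t̄* ∈ ℝ = ∂|·|^q(0): there exists ε > 0 such that the graph of ∂|·|^q intersected with B_ε(0) × B_ε(t̄*) equals {0} × B_ε(t̄*), and the prox-regularity inequality holds with ρ = 0. -/
open Filter Topology

noncomputable section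

/-- The subdifferential mapping of t ↦ |t|^q for 0 < q < 1. -/
def subdiffAbsPow (q : ℝ) (t : ℝ) : Set ℝ :=
  if t = 0 then Set.univ else {q * |t| ^ (q - 1) * Real.sign t}

/-- For 0 < q < 1, t ↦ |t|^q is prox-regular at 0 for every t̄* ∈ ℝ = ∂|·|^q(0):
near (0, t̄*) the graph of the subdifferential is {0} × B_ε(t̄*), and the
prox-regularity inequality holds with ρ = 0. -/
theorem abs_rpow_proxRegular_at_zero (q : ℝ) (hq0 : 0 < q) (hq1 : q < 1)
    (tbs : ℝ) :
    ∃ ε > (0 : ℝ),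
      ({p : ℝ × ℝ | p.2 ∈ subdiffAbsPow q p.1} ∩
          Metric.ball (0 : ℝ) ε ×ˢ Metric.ball tbs ε
        = ({0} : Set ℝ) ×ˢ Metric.ball tbs ε) ∧
      (∀ x' x : ℝ, |x' - 0| < ε → |x - 0| < ε → |(|x| ^ q - |(0 : ℝ)| ^ q)| ≤ ε →
        ∀ xs ∈ subdiffAbsPow q x, |xs - tbs| < ε →
          |x| ^ q + xs * (x' - x) - (0 : ℝ) / 2 * (x' - x) ^ 2 ≤ |x'| ^ q) := by
  have hq1' : q - 1 < 0 := by linarith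
  set M : ℝ := max ((|tbs| + 1) / q) 1 with hMdef
  have hM1 : (1 : ℝ) ≤ M := le_max_right _ _
  have hM0 : (0 : ℝ) < M := lt_of_lt_of_le one_pos hM1
  have hqM : |tbs| + 1 ≤ q * M := by
    have : (|tbs| + 1) / q ≤ M := le_max_left _ _
    calc |tbs| + 1 = q * ((|tbs| + 1) / q) := by field_simp
    _ ≤ q * M := by nlinarith
  set ε : ℝ := M ^ (q - 1)⁻¹ with hεdef
  have hεpos : 0 < ε := Real.rpow_pos_of_pos hM0 _
  have hεpow : ε ^ (q - 1) = M := Real.rpow_inv_rpow hM0.le hq1'.ne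
  have hεle1 : ε ≤ 1 :=
    Real.rpow_le_one_of_one_le_of_nonpos hM1 (inv_nonpos.mpr hq1'.le)
  -- key fact: for 0 < |t| < ε, the subgradient is far from tbs
  have key : ∀ t : ℝ, t ≠ 0 → |t| < ε →
      ¬ |q * |t| ^ (q - 1) * Real.sign t - tbs| < ε := by
    intro t ht htε hlt
    have habs : (0 : ℝ) < |t| := abs_pos.mpr ht
    have hpow : M < |t| ^ (q - 1) := by
      have := Real.rpow_lt_rpow_of_neg habs htε hq1'
      rwa [hεpow] at this
    have hs : |Real.sign t| = 1 := by
      rcases lt_or_gt_of_ne ht with h | h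
      · rw [Real.sign_of_neg h]; norm_num
      · rw [Real.sign_of_pos h]; norm_num
    have hbig : |tbs| + ε < |q * |t| ^ (q - 1) * Real.sign t| := by
      rw [abs_mul, abs_mul, hs, abs_of_pos hq0,
        abs_of_pos (Real.rpow_pos_of_pos habs _), mul_one]
      have : q * M < q * |t| ^ (q - 1) := by nlinarith
      nlinarith
    have := abs_sub_abs_le_abs_sub (q * |t| ^ (q - 1) * Real.sign t) tbs
    linarith
  refine ⟨ε, hεpos, ?_, ?_⟩
  · ext ⟨t, s⟩
    simp only [Set.mem_inter_iff, Set.mem_setOf_eq, Set.mem_prod, Metric.mem_ball,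
      Set.mem_singleton_iff, Real.dist_eq]
    constructor
    · rintro ⟨hsub, ht, hsb⟩
      refine ⟨?_, hsb⟩
      by_contra ht0
      simp only [subdiffAbsPow, if_neg ht0, Set.mem_singleton_iff] at hsub
      rw [sub_zero] at ht
      exact key t ht0 ht (hsub ▸ hsb)
    · rintro ⟨rfl, hs⟩
      refine ⟨?_, ?_, hs⟩
      · simp [subdiffAbsPow]
      · simpa using hεpos
  · intro x' x hx' hx hφ xs hxs hxsb
    have hx0 : x = 0 := by
      by_contra hx0
      simp only [subdiffAbsPow, if_neg hx0, Set.mem_singleton_iff] at hxs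
      rw [sub_zero] at hx
      exact key x hx0 hx (hxs ▸ hxsb)
    subst hx0
    rw [sub_zero] at hx'
    simp only [abs_zero, Real.zero_rpow hq0.ne', sub_zero, zero_add, zero_div, zero_mul,
      sub_zero]
    rcases eq_or_ne x' 0 with rfl | hx'0
    · simp [Real.zero_rpow hq0.ne']
    · have habs : (0 : ℝ) < |x'| := abs_pos.mpr hx'0
      have hpow : M < |x'| ^ (q - 1) := by
        have := Real.rpow_lt_rpow_of_neg habs hx' hq1'
        rwa [hεpow] at this
      have hxsbound : |xs| < |tbs| + ε := by
        have := abs_sub_abs_le_abs_sub xs tbs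
        linarith
      have h1 : xs * x' ≤ |xs| * |x'| := by
        calc xs * x' ≤ |xs * x'| := le_abs_self _
        _ = |xs| * |x'| := abs_mul _ _
      have h2 : |xs| * |x'| < M * |x'| := by
        have : |xs| < M := by nlinarith
        nlinarith
      have h3 : M * |x'| < |x'| ^ (q - 1) * |x'| := by nlinarith
      have h4 : |x'| ^ (q - 1) * |x'| = |x'| ^ q := by
        nth_rewrite 2 [← Real.rpow_one |x'|]
        rw [← Real.rpow_add habs]
        norm_num
      linarith [h4 ▸ h3, h1, h2]
end
end

section
/- Let f, g, λ and φ_λ be as in the forward-backward envelope setting, let x̃ ∈ T_λ(x) := argmin_z [ℓ_f(x,z) + (1/(2λ))‖z-x‖² + g(z)] with ℓ_f(x,z) = f(x) + ⟨∇f(x), z-x⟩, and suppose f(x̃) ≤ ℓ_f(x, x̃) + (L/2)‖x̃ - x‖². Then φ(x̃) ≤ φ_λ(x) - ((1 - λL)/(2λ))‖x̃ - x‖², where φ = f + g. -/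
open Filter Topology
open scoped RealInnerProductSpace

noncomputable section

/-- The forward-backward model function
ψ_λ(x,z) = f(x) + ⟨∇f(x), z-x⟩ + (1/(2λ))‖z-x‖² + g(z). -/
def fbModel {n : ℕ} (f : EuclideanSpace ℝ (Fin n) → ℝ)
    (gradf : EuclideanSpace ℝ (Fin n) → EuclideanSpace ℝ (Fin n))
    (g : EuclideanSpace ℝ (Fin n) → EReal) (lam : ℝ)
    (x z : EuclideanSpace ℝ (Fin n)) : EReal :=
  ((f x + ⟪gradf x, z - x⟫ + 1 / (2 * lam) * ‖z - x‖ ^ 2 : ℝ) : EReal) + g z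

/-- The forward-backward envelope φ_λ(x) = min_z ψ_λ(x,z). -/
def fbEnvelope {n : ℕ} (f : EuclideanSpace ℝ (Fin n) → ℝ)
    (gradf : EuclideanSpace ℝ (Fin n) → EuclideanSpace ℝ (Fin n))
    (g : EuclideanSpace ℝ (Fin n) → EReal) (lam : ℝ)
    (x : EuclideanSpace ℝ (Fin n)) : EReal :=
  ⨅ z, fbModel f gradf g lam x z

theorem EReal.coe_add_sub_coe (a c : ℝ) (y : EReal) :
    (a : EReal) + y - (c : EReal) = ((a - c : ℝ) : EReal) + y := by
  rw [EReal.coe_sub, sub_eq_add_neg, sub_eq_add_neg, add_right_comm]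

theorem fbEnvelope_eq_fbModel_of_forall_le {n : ℕ} {f : EuclideanSpace ℝ (Fin n) → ℝ}
    {gradf : EuclideanSpace ℝ (Fin n) → EuclideanSpace ℝ (Fin n)}
    {g : EuclideanSpace ℝ (Fin n) → EReal} {lam : ℝ} {x xt : EuclideanSpace ℝ (Fin n)}
    (hxt : ∀ z, fbModel f gradf g lam x xt ≤ fbModel f gradf g lam x z) :
    fbEnvelope f gradf g lam x = fbModel f gradf g lam x xt :=
  le_antisymm (iInf_le _ xt) (le_iInf hxt)

/-- Lowering the proximal weight `1/(2λ)` to `L/2` turns the model into the quadratic upper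
model of the descent inequality, plus `g`. -/
theorem fbModel_sub_eq {n : ℕ} (f : EuclideanSpace ℝ (Fin n) → ℝ)
    (gradf : EuclideanSpace ℝ (Fin n) → EuclideanSpace ℝ (Fin n))
    (g : EuclideanSpace ℝ (Fin n) → EReal) {lam : ℝ} (hlam : lam ≠ 0) (L : ℝ)
    (x z : EuclideanSpace ℝ (Fin n)) :
    fbModel f gradf g lam x z - (((1 - lam * L) / (2 * lam) * ‖z - x‖ ^ 2 : ℝ) : EReal)
      = ((f x + ⟪gradf x, z - x⟫ + L / 2 * ‖z - x‖ ^ 2 : ℝ) : EReal) + g z := by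
  rw [fbModel, EReal.coe_add_sub_coe]
  congr 3
  field_simp
  ring

theorem fb_sufficient_decrease_general
    {n : ℕ} (f : EuclideanSpace ℝ (Fin n) → ℝ)
    (gradf : EuclideanSpace ℝ (Fin n) → EuclideanSpace ℝ (Fin n))
    (g : EuclideanSpace ℝ (Fin n) → EReal)
    (lam : ℝ) (hlam0 : 0 < lam)
    (L : ℝ) (x xt : EuclideanSpace ℝ (Fin n))
    (hxt : ∀ z', fbModel f gradf g lam x xt ≤ fbModel f gradf g lam x z')
    (hdescent : f xt ≤ f x + ⟪gradf x, xt - x⟫ + L / 2 * ‖xt - x‖ ^ 2) :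
    ((f xt : ℝ) : EReal) + g xt
      ≤ fbEnvelope f gradf g lam x
          - (((1 - lam * L) / (2 * lam) * ‖xt - x‖ ^ 2 : ℝ) : EReal) := by
  rw [fbEnvelope_eq_fbModel_of_forall_le hxt, fbModel_sub_eq f gradf g hlam0.ne' L]
  exact add_le_add_left (EReal.coe_le_coe_iff.mpr hdescent) _

/-- Sufficient-decrease property of the forward-backward step: if x̃ ∈ T_λ(x) and the
descent inequality f(x̃) ≤ ℓ_f(x,x̃) + (L/2)‖x̃-x‖² holds, then
φ(x̃) ≤ φ_λ(x) - ((1-λL)/(2λ))‖x̃-x‖². -/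
theorem fb_sufficient_decrease
    {n : ℕ} (f : EuclideanSpace ℝ (Fin n) → ℝ)
    (gradf : EuclideanSpace ℝ (Fin n) → EuclideanSpace ℝ (Fin n))
    (hgrad : ∀ x, HasGradientAt f (gradf x) x)
    (g : EuclideanSpace ℝ (Fin n) → EReal)
    (hproper : ∃ y, g y ≠ ⊤) (hnotbot : ∀ y, g y ≠ ⊥)
    (hlsc : LowerSemicontinuous g)
    (lamg : ℝ) (hlamg : 0 < lamg)
    (hproxbdd : ∀ lam : ℝ, 0 < lam → lam < lamg →
      ∀ x, ∃ z, ∀ z', fbModel f gradf g lam x z ≤ fbModel f gradf g lam x z')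
    (lam : ℝ) (hlam0 : 0 < lam) (hlam : lam < lamg)
    (L : ℝ) (x xt : EuclideanSpace ℝ (Fin n))
    (hxt : ∀ z', fbModel f gradf g lam x xt ≤ fbModel f gradf g lam x z')
    (hdescent : f xt ≤ f x + ⟪gradf x, xt - x⟫ + L / 2 * ‖xt - x‖ ^ 2) :
    ((f xt : ℝ) : EReal) + g xt
      ≤ fbEnvelope f gradf g lam x
          - (((1 - lam * L) / (2 * lam) * ‖xt - x‖ ^ 2 : ℝ) : EReal) :=
  fb_sufficient_decrease_general f gradf g lam hlam0 L x xt hxt hdescent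
end
end
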